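/- arXiv:2404.00116 — 6 statements merged into one kernel-verified Lean document; each statement's English description precedes it below -/
import Mathlib

section
/- Equivalent formulations of the AB interface entropy condition (Lemma 2.2): Let f_l, f_r be uniformly convex C² fluxes as in the context and let (A,B) be a connection. Then for every pair (u_l, u_r) ∈ ℝ² the two conditions f_l(u_l) = f_r(u_r) and I^{AB}(u_l, u_r) ≤ 0 hold simultaneously if and only if the following hold simultaneously: f_l(u_l) = f_r(u_r), f_r(u_r) ≥ f_r(B) (equivalently f_l(u_l) ≥ f_l(A)), and the implication (u_l ≤ θ_l and u_r ≥ θ_r) ⟹ (u_l = A and u_r = B). -/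
noncomputable section

/-- The interface entropy functional
`I^{AB}(u_l,u_r) = sgn(u_r - B)(f_r(u_r) - f_r(B)) - sgn(u_l - A)(f_l(u_l) - f_l(A))`. -/
def IAB (fl fr : ℝ → ℝ) (A B ul ur : ℝ) : ℝ :=
  Real.sign (ur - B) * (fr ur - fr B) - Real.sign (ul - A) * (fl ul - fl A)

/-- **Lemma 2.2**: equivalent formulations of the `AB` interface entropy condition. -/
theorem interface_entropy_condition_equiv
    (fl fr : ℝ → ℝ) (a : ℝ) (ha : 0 < a)
    (hfl : ContDiff ℝ 2 fl) (hfr : ContDiff ℝ 2 fr)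
    (hfl2 : ∀ u : ℝ, a ≤ deriv (deriv fl) u) (hfr2 : ∀ u : ℝ, a ≤ deriv (deriv fr) u)
    (θl θr : ℝ) (hθl : deriv fl θl = 0) (hθr : deriv fr θr = 0)
    (A B : ℝ) (hAB : fl A = fr B) (hA : A ≤ θl) (hB : θr ≤ B)
    (ul ur : ℝ) :
    (fl ul = fr ur ∧ IAB fl fr A B ul ur ≤ 0) ↔
      (fl ul = fr ur ∧ fr B ≤ fr ur ∧ ((ul ≤ θl ∧ θr ≤ ur) → ul = A ∧ ur = B)) := by
  have hdfl : StrictMono (deriv fl) :=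
    strictMono_of_deriv_pos fun u => ha.trans_le (hfl2 u)
  have hdfr : StrictMono (deriv fr) :=
    strictMono_of_deriv_pos fun u => ha.trans_le (hfr2 u)
  have hLa : StrictAntiOn fl (Set.Iic θl) := by
    apply strictAntiOn_of_deriv_neg (convex_Iic θl) hfl.continuous.continuousOn
    intro x hx
    rw [interior_Iic] at hx
    have := hdfl hx
    rwa [hθl] at this
  have hRm : StrictMonoOn fr (Set.Ici θr) := by
    apply strictMonoOn_of_deriv_pos (convex_Ici θr) hfr.continuous.continuousOn
    intro x hx
    rw [interior_Ici] at hx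
    have := hdfr hx
    rwa [hθr] at this
  -- basic monotonicity facts
  have L1 : ∀ x, x < A → fl A < fl x := fun x hx =>
    hLa (Set.mem_Iic.2 (hx.le.trans hA)) (Set.mem_Iic.2 hA) hx
  have R1 : ∀ y, B < y → fr B < fr y := fun y hy =>
    hRm (Set.mem_Ici.2 hB) (Set.mem_Ici.2 (hB.trans hy.le)) hy
  constructor
  · rintro ⟨heq, hI⟩
    unfold IAB at hI
    have hsge : fr B ≤ fr ur := by
      by_contra h
      push_neg at h
      have hul : A < ul := by
        rcases lt_trichotomy ul A with h1 | h1 | h1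
        · have := L1 ul h1; linarith
        · rw [h1] at heq; linarith
        · exact h1
      have hur : ur < B := by
        rcases lt_trichotomy ur B with h1 | h1 | h1
        · exact h1
        · rw [h1] at h; linarith
        · have := R1 ur h1; linarith
      rw [Real.sign_of_neg (by linarith : ur - B < 0),
        Real.sign_of_pos (by linarith : (0:ℝ) < ul - A)] at hI
      linarith
    refine ⟨heq, hsge, ?_⟩
    rintro ⟨h1, h2⟩
    have hulA : ul = A := by
      rcases lt_trichotomy ul A with h | h | h
      · -- ul < A : then fl A < fl ul, sign(ul-A) = -1
        have hs : fl A < fl ul := L1 ul h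
        have hspos : (0:ℝ) < fr ur - fr B := by linarith
        rw [Real.sign_of_neg (by linarith : ul - A < 0)] at hI
        have hur : ur < B := by
          rcases lt_trichotomy ur B with h3 | h3 | h3
          · exact h3
          · rw [h3, sub_self, Real.sign_zero] at hI; norm_num at hI; linarith
          · rw [Real.sign_of_pos (by linarith : (0:ℝ) < ur - B)] at hI; linarith
        have := hRm (Set.mem_Ici.2 h2) (Set.mem_Ici.2 hB) hur
        linarith
      · exact h
      · have := hLa (Set.mem_Iic.2 hA) (Set.mem_Iic.2 h1) h
        linarith
    refine ⟨hulA, ?_⟩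
    have hfre : fr ur = fr B := by rw [← heq, hulA, hAB]
    exact hRm.injOn (Set.mem_Ici.2 h2) (Set.mem_Ici.2 hB) hfre
  · rintro ⟨heq, hsge, himp⟩
    refine ⟨heq, ?_⟩
    have hs : fl ul - fl A = fr ur - fr B := by linarith
    unfold IAB
    rcases eq_or_lt_of_le hsge with h0 | h0
    · rw [show fr ur - fr B = 0 by linarith, show fl ul - fl A = 0 by linarith]
      simp
    · -- strictly positive difference
      have hsl : Real.sign (ur - B) ≤ Real.sign (ul - A) := by
        rcases lt_trichotomy ur B with h1 | h1 | h1
        · rw [Real.sign_of_neg (by linarith : ur - B < 0)]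
          rcases lt_trichotomy ul A with h2 | h2 | h2
          · rw [Real.sign_of_neg (by linarith : ul - A < 0)]
          · rw [h2, sub_self, Real.sign_zero]; norm_num
          · rw [Real.sign_of_pos (by linarith : (0:ℝ) < ul - A)]; norm_num
        · exfalso; rw [h1] at h0; linarith
        · -- ur > B : must have ul > A
          have hulA : A < ul := by
            rcases lt_trichotomy ul A with h2 | h2 | h2
            · exfalso
              have := himp ⟨h2.le.trans hA, hB.trans h1.le⟩
              linarith [this.1]
            · exfalso
              rw [h2] at hs; rw [sub_self] at hs; linarith
            · exact h2
          rw [Real.sign_of_pos (by linarith : (0:ℝ) < ur - B),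
            Real.sign_of_pos (by linarith : (0:ℝ) < ul - A)]
      rw [hs]
      have := mul_le_mul_of_nonneg_right hsl (by linarith : (0:ℝ) ≤ fr ur - fr B)
      linarith
end
end

section
/- Nonpositivity of the Kruzhkov interface functional α for a fixed connection (Lemma A.1): Let f_l, f_r be uniformly convex C² fluxes as in the context and let (A,B) be a connection. For any two pairs (u_l,u_r), (v_l,v_r) ∈ ℝ² satisfying I^{AB}(u_l,u_r) ≤ 0, I^{AB}(v_l,v_r) ≤ 0, f_l(u_l) = f_r(u_r) and f_l(v_l) = f_r(v_r), one has α(u_l,u_r,v_l,v_r) ≤ 0. -/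
/-!
Uniform convexity makes each flux V-shaped: `f_l` decreases left of `θ_l` and increases right of
it, and likewise `f_r`. On pairs with `f_l(u_l) = f_r(u_r)`, `f_l(v_l) = f_r(v_r)` the functional
factors as `α = (sgn(u_r - v_r) - sgn(u_l - v_l)) (f_l(u_l) - f_l(v_l))`, and `I^{AB}(w)` is
`α(w, (A, B))`. Through this factorisation, `I^{AB}(w) ≤ 0` says that the flux value of `w` is at
least `f_l(A)`, and strictly above it only if `w_l` is on the increasing branch of `f_l` or `w_r` on
the decreasing branch of `f_r`. So if `f_l(u_l) < f_l(v_l)`, the branch carrying `v` forces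
`u_l < v_l` or `u_r > v_r`, which is the sign condition for `α ≤ 0`.
-/

open Set

noncomputable section

/-- The Kruzhkov interface functional
`α(u_l,u_r,v_l,v_r) = sgn(u_r - v_r)(f_r(u_r) - f_r(v_r)) - sgn(u_l - v_l)(f_l(u_l) - f_l(v_l))`. -/
def alphaFn (fl fr : ℝ → ℝ) (ul ur vl vr : ℝ) : ℝ :=
  Real.sign (ur - vr) * (fr ur - fr vr) - Real.sign (ul - vl) * (fl ul - fl vl)

lemma Real.neg_one_le_sign (r : ℝ) : -1 ≤ Real.sign r := by
  rcases Real.sign_apply_eq r with h | h | h <;> rw [h] <;> norm_num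

lemma Real.sign_le_one (r : ℝ) : Real.sign r ≤ 1 := by
  rcases Real.sign_apply_eq r with h | h | h <;> rw [h] <;> norm_num

lemma Real.sign_le_sign_of_neg_left {x : ℝ} (hx : x < 0) (y : ℝ) : Real.sign x ≤ Real.sign y :=
  (Real.sign_of_neg hx).symm ▸ Real.neg_one_le_sign y

lemma Real.sign_le_sign_of_pos_right (x : ℝ) {y : ℝ} (hy : 0 < y) : Real.sign x ≤ Real.sign y :=
  (Real.sign_of_pos hy).symm ▸ Real.sign_le_one x

lemma Real.sign_lt_sign_of_neg_of_pos {x y : ℝ} (hx : x < 0) (hy : 0 < y) :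
    Real.sign x < Real.sign y := by
  rw [Real.sign_of_neg hx, Real.sign_of_pos hy]
  norm_num

section Reflect

variable {α β : Type*} [LinearOrder α] [Preorder β] {f : α → β} {θ x y : α}

lemma MonotoneOn.lt_of_lt_of_mem_Ici (hf : MonotoneOn f (Ici θ)) (hy : θ ≤ y)
    (hxy : f x < f y) : x < y :=
  not_le.1 fun hyx => hxy.not_ge (hf hy (hy.trans hyx) hyx)

lemma AntitoneOn.lt_of_lt_of_mem_Iic (hf : AntitoneOn f (Iic θ)) (hy : y ≤ θ)
    (hxy : f x < f y) : y < x :=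
  not_le.1 fun hxy' => hxy.not_ge (hf (hxy'.trans hy) hy hxy')

end Reflect

lemma antitoneOn_Iic_and_monotoneOn_Ici_of_deriv_eq_zero {f : ℝ → ℝ} {θ : ℝ}
    (hf : Differentiable ℝ f) (hf2 : ∀ x, 0 < deriv (deriv f) x) (hθ : deriv f θ = 0) :
    AntitoneOn f (Iic θ) ∧ MonotoneOn f (Ici θ) := by
  have hmono : Monotone (deriv f) := (strictMono_of_deriv_pos hf2).monotone
  refine ⟨antitoneOn_of_deriv_nonpos (convex_Iic θ) hf.continuous.continuousOn
      hf.differentiableOn fun x hx => ?_,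
    monotoneOn_of_deriv_nonneg (convex_Ici θ) hf.continuous.continuousOn
      hf.differentiableOn fun x hx => ?_⟩
  · rw [interior_Iic] at hx
    exact hθ ▸ hmono (le_of_lt hx)
  · rw [interior_Ici] at hx
    exact hθ ▸ hmono (le_of_lt hx)

section Alpha

variable {fl fr : ℝ → ℝ} {ul ur vl vr : ℝ}

lemma IAB_eq_alphaFn (A B : ℝ) : IAB fl fr A B ul ur = alphaFn fl fr ul ur A B := rfl

lemma alphaFn_comm : alphaFn fl fr ul ur vl vr = alphaFn fl fr vl vr ul ur := by
  unfold alphaFn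
  rw [← neg_sub ul, ← neg_sub ur, Real.sign_neg, Real.sign_neg]
  ring

lemma alphaFn_eq_of_flux_eq (hu : fl ul = fr ur) (hv : fl vl = fr vr) :
    alphaFn fl fr ul ur vl vr = (Real.sign (ur - vr) - Real.sign (ul - vl)) * (fl ul - fl vl) := by
  unfold alphaFn
  rw [hu, hv]
  ring

lemma alphaFn_nonpos_iff_of_flux_lt (hu : fl ul = fr ur) (hv : fl vl = fr vr)
    (hlt : fl ul < fl vl) :
    alphaFn fl fr ul ur vl vr ≤ 0 ↔ Real.sign (ul - vl) ≤ Real.sign (ur - vr) := by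
  rw [alphaFn_eq_of_flux_eq hu hv, ← zero_mul (fl ul - fl vl),
    mul_le_mul_right_of_neg (sub_neg.2 hlt), sub_nonneg]

end Alpha

section Connection

variable {fl fr : ℝ → ℝ} {θl θr A B wl wr : ℝ}

lemma flux_le_of_IAB_nonpos (hl : AntitoneOn fl (Iic θl)) (hr : MonotoneOn fr (Ici θr))
    (hAB : fl A = fr B) (hA : A ≤ θl) (hB : θr ≤ B) (hw : fl wl = fr wr)
    (hI : IAB fl fr A B wl wr ≤ 0) : fl A ≤ fl wl := by
  by_contra! hlt
  have hwl : A < wl := hl.lt_of_lt_of_mem_Iic hA hlt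
  have hwr : wr < B := hr.lt_of_lt_of_mem_Ici hB (by rwa [← hw, ← hAB])
  rw [IAB_eq_alphaFn, alphaFn_nonpos_iff_of_flux_lt hw hAB hlt] at hI
  exact hI.not_gt (Real.sign_lt_sign_of_neg_of_pos (sub_neg.2 hwr) (sub_pos.2 hwl))

lemma lt_left_or_right_lt_of_IAB_nonpos (hl : AntitoneOn fl (Iic θl))
    (hr : MonotoneOn fr (Ici θr)) (hAB : fl A = fr B) (hw : fl wl = fr wr)
    (hI : IAB fl fr A B wl wr ≤ 0) (hlt : fl A < fl wl) : θl < wl ∨ wr < θr := by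
  by_contra! hθ
  have hwl : wl < A := hl.lt_of_lt_of_mem_Iic hθ.1 hlt
  have hwr : B < wr := hr.lt_of_lt_of_mem_Ici hθ.2 (by rwa [← hw, ← hAB])
  rw [IAB_eq_alphaFn, alphaFn_comm, alphaFn_nonpos_iff_of_flux_lt hAB hw hlt] at hI
  exact hI.not_gt (Real.sign_lt_sign_of_neg_of_pos (sub_neg.2 hwr) (sub_pos.2 hwl))

end Connection

lemma alphaFn_nonpos_of_flux_lt {fl fr : ℝ → ℝ} {θl θr ul ur vl vr : ℝ}
    (hl : MonotoneOn fl (Ici θl)) (hr : AntitoneOn fr (Iic θr))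
    (hu : fl ul = fr ur) (hv : fl vl = fr vr) (hlt : fl ul < fl vl) (hvθ : θl < vl ∨ vr < θr) :
    alphaFn fl fr ul ur vl vr ≤ 0 := by
  rw [alphaFn_nonpos_iff_of_flux_lt hu hv hlt]
  rcases hvθ with hvl | hvr
  · exact Real.sign_le_sign_of_neg_left (sub_neg.2 (hl.lt_of_lt_of_mem_Ici hvl.le hlt)) _
  · refine Real.sign_le_sign_of_pos_right _ (sub_pos.2 (hr.lt_of_lt_of_mem_Iic hvr.le ?_))
    rwa [← hu, ← hv]

/-- **Lemma A.1**: nonpositivity of the Kruzhkov interface functional `α` for a fixed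
connection. -/
theorem alpha_nonpos
    (fl fr : ℝ → ℝ) (a : ℝ) (ha : 0 < a)
    (hfl : ContDiff ℝ 2 fl) (hfr : ContDiff ℝ 2 fr)
    (hfl2 : ∀ u : ℝ, a ≤ deriv (deriv fl) u) (hfr2 : ∀ u : ℝ, a ≤ deriv (deriv fr) u)
    (θl θr : ℝ) (hθl : deriv fl θl = 0) (hθr : deriv fr θr = 0)
    (A B : ℝ) (hAB : fl A = fr B) (hA : A ≤ θl) (hB : θr ≤ B)
    (ul ur vl vr : ℝ)
    (hIu : IAB fl fr A B ul ur ≤ 0) (hIv : IAB fl fr A B vl vr ≤ 0)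
    (hRHu : fl ul = fr ur) (hRHv : fl vl = fr vr) :
    alphaFn fl fr ul ur vl vr ≤ 0 := by
  obtain ⟨hl_anti, hl_mono⟩ := antitoneOn_Iic_and_monotoneOn_Ici_of_deriv_eq_zero
    (hfl.differentiable (by norm_num)) (fun u => ha.trans_le (hfl2 u)) hθl
  obtain ⟨hr_anti, hr_mono⟩ := antitoneOn_Iic_and_monotoneOn_Ici_of_deriv_eq_zero
    (hfr.differentiable (by norm_num)) (fun u => ha.trans_le (hfr2 u)) hθr
  wlog hle : fl ul ≤ fl vl generalizing ul ur vl vr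
  · rw [alphaFn_comm]
    exact this vl vr ul ur hIv hIu hRHv hRHu (le_of_not_ge hle)
  rcases hle.lt_or_eq with hlt | heq
  · have hAu := flux_le_of_IAB_nonpos hl_anti hr_mono hAB hA hB hRHu hIu
    exact alphaFn_nonpos_of_flux_lt hl_mono hr_anti hRHu hRHv hlt
      (lt_left_or_right_lt_of_IAB_nonpos hl_anti hr_mono hAB hRHv hIv (hAu.trans_lt hlt))
  · rw [alphaFn_eq_of_flux_eq hRHu hRHv, heq, sub_self, mul_zero]
end
end

section
/- Well-posedness and a priori bounds for the left backward-shock Cauchy problem (Section 3.1): Let f, θ, T be as in the context, let B > θ, R ∈ (0, T·f'(B)), and t₀ := R/f'(B) ∈ (0,T). Then there exists a unique C¹ function y : [t₀, T] → ℝ solving the left backward-shock Cauchy problem with data (R,B); moreover every such solution y satisfies: y(t) + R > t·f'(B̄) for all t ∈ [t₀,T] (so that (f')⁻¹((y(t)+R)/t) > B̄ and the right-hand side of the ODE is well defined); T·f'(B̄) < y(t) ≤ 0 for all t ∈ [t₀,T], with y(t) < 0 for t ∈ (t₀,T]; y'(t) ≤ 0 for all t; t ↦ y'(t) is strictly decreasing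 on [t₀,T]; and y(T) ∈ (T·f'(B̄), 0). -/
noncomputable section

open Set Filter

/-- The Rankine–Hugoniot speed `λ(u,v) = (f(v) - f(u)) / (v - u)`. -/
def lamF (f : ℝ → ℝ) (u v : ℝ) : ℝ := (f v - f u) / (v - u)

/-- `y` solves the left backward-shock Cauchy problem with data `(R, B)` on
`[R / f'(B), T]`:  `y(R/f'(B)) = 0` and `y'(t) = λ((f')⁻¹((y(t)+R)/t), B̄)`.
Here `finv` denotes the inverse of `deriv f`. -/
def LeftShockSol (f finv : ℝ → ℝ) (T B Bbar R : ℝ) (y : ℝ → ℝ) : Prop :=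
  y (R / deriv f B) = 0 ∧
  ∀ t ∈ Icc (R / deriv f B) T,
    HasDerivWithinAt y (lamF f (finv ((y t + R) / t)) Bbar) (Icc (R / deriv f B) T) t

/-- `x` solves the right backward-shock Cauchy problem with data `(L, A)` on
`[L / f'(A), T]`:  `x(L/f'(A)) = 0` and `x'(t) = λ((f')⁻¹((x(t)+L)/t), Ā)`.
Here `finv` denotes the inverse of `deriv f`. -/
def RightShockSol (f finv : ℝ → ℝ) (T A Abar L : ℝ) (x : ℝ → ℝ) : Prop :=
  x (L / deriv f A) = 0 ∧
  ∀ t ∈ Icc (L / deriv f A) T,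
    HasDerivWithinAt x (lamF f (finv ((x t + L) / t)) Abar) (Icc (L / deriv f A) T) t

/-!
Along a solution put `p(t) = (y(t) + R) / t` and `v(t) = (f')⁻¹(p(t))`. Then `t · G(p(t))` is
conserved, where `G(p) = f(B̄) + f*(p) - p B̄` is the Fenchel–Young gap of `f` and its Legendre
transform `f*`: as `G' = (f')⁻¹ - B̄`, its derivative along the ODE is
`G(p) + (v - B̄)(λ(v, B̄) - p)`, which vanishes because `(v - B̄) λ(v, B̄) = f(v) - f(B̄)`.
Its value at `t₀` is `R (B - B̄) > 0`. Now `G` is convex with minimum `0` at `f'(B̄)`, so it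
maps `(f'(B̄), ∞)` diffeomorphically onto `(0, ∞)`; since `p` starts at `f'(B) > f'(B̄)` and can
never reach `f'(B̄)`, we get `p(t) = G⁻¹(R (B - B̄) / t)`, and conversely this formula solves the
problem. So `p` and `v` decrease, and by strict convexity so does the shock speed
`λ(v, B̄) = slope f B̄ v`, which vanishes at `t₀` (as `f(B̄) = f(B)`) and exceeds `f'(B̄)`;
integrating `y' = λ` gives the bounds on `y`.
-/

theorem strictMono_and_hasDerivAt_rightInverse {φ φ' ψ : ℝ → ℝ}
    (hφ : ∀ x, HasDerivAt φ (φ' x) x) (hφ' : ∀ x, 0 < φ' x) (hψ : Function.RightInverse ψ φ) :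
    StrictMono ψ ∧ ∀ p, HasDerivAt ψ (φ' (ψ p))⁻¹ p := by
  let e := (strictMono_of_deriv_pos fun x => (hφ x).deriv ▸ hφ' x).orderIsoOfRightInverse φ ψ hψ
  exact ⟨e.symm.strictMono, fun p => (hφ (ψ p)).of_local_left_inverse
    e.symm.continuous.continuousAt (hφ' _).ne' (Eventually.of_forall hψ)⟩

theorem StrictMonoOn.exists_orderIso_eqOn_Ici {g : ℝ → ℝ} {p₀ : ℝ} (hg : StrictMonoOn g (Ici p₀))
    (hsurj : Ici (g p₀) ⊆ g '' Ici p₀) : ∃ e : ℝ ≃o ℝ, EqOn e g (Ici p₀) := by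
  set Ψ : ℝ → ℝ := fun p => if p₀ ≤ p then g p else p - p₀ + g p₀
  have hΨmono : StrictMono Ψ := by
    intro p q hpq
    by_cases hq : p₀ ≤ q
    · by_cases hp : p₀ ≤ p
      · simpa [Ψ, hp, hq] using hg hp hq hpq
      · simp only [Ψ, hp, hq, if_true, if_false]
        linarith [hg.monotoneOn (mem_Ici.2 le_rfl) hq hq]
    · have hp : ¬ p₀ ≤ p := fun hp => hq (hp.trans hpq.le)
      simp only [Ψ, hp, hq, if_false]
      linarith
  have hΨsurj : Function.Surjective Ψ := by
    intro s
    by_cases hs : g p₀ ≤ s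
    · obtain ⟨p, hp, rfl⟩ := hsurj hs
      exact ⟨p, if_pos hp⟩
    · refine ⟨s - g p₀ + p₀, ?_⟩
      simp only [Ψ, if_neg (show ¬ p₀ ≤ s - g p₀ + p₀ by push Not at hs ⊢; linarith)]
      ring
  exact ⟨hΨmono.orderIsoOfSurjective Ψ hΨsurj, fun p hp => if_pos hp⟩

theorem forall_lt_of_continuousOn_Icc_of_ne {g : ℝ → ℝ} {a b c : ℝ}
    (hg : ContinuousOn g (Icc a b)) (ha : c < g a) (hne : ∀ t ∈ Icc a b, g t ≠ c) :
    ∀ t ∈ Icc a b, c < g t := by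
  intro t ht
  by_contra! h
  obtain ⟨s, hs, hsc⟩ := intermediate_value_Icc' ht.1 (hg.mono (Icc_subset_Icc le_rfl ht.2))
    ⟨h, ha.le⟩
  exact hne s ⟨hs.1, hs.2.trans ht.2⟩ hsc

theorem StrictConvexOn.strictAntiOn_slope_comp {f v : ℝ → ℝ} {b : ℝ} {s : Set ℝ}
    (hf : StrictConvexOn ℝ univ f) (hv : StrictAntiOn v s) (hvb : ∀ t ∈ s, b < v t) :
    StrictAntiOn (fun t => slope f b (v t)) s := fun t₁ ht₁ t₂ ht₂ h => by
  simp only [slope_def_field]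
  exact hf.secant_strict_mono (mem_univ b) (mem_univ _) (mem_univ _) (hvb t₂ ht₂).ne'
    (hvb t₁ ht₁).ne' (hv ht₁ ht₂ h)

theorem StrictConvexOn.apply_lt_of_deriv_eq_zero {f : ℝ → ℝ} {θ x : ℝ}
    (hf : StrictConvexOn ℝ univ f) (hd : DifferentiableAt ℝ f θ) (hθ : deriv f θ = 0)
    (hx : θ < x) : f θ < f x := by
  have := hf.deriv_lt_slope (mem_univ θ) (mem_univ x) hx hd
  rw [hθ, slope_def_field] at this
  exact sub_pos.1 ((div_pos_iff_of_pos_right (sub_pos.2 hx)).1 this)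

theorem strictAntiOn_of_eq_comp_div {p P : ℝ → ℝ} {a b c : ℝ} (hP : StrictMono P) (hc : 0 < c)
    (ha : 0 < a) (hp : ∀ t ∈ Icc a b, p t = P (c / t)) : StrictAntiOn p (Icc a b) :=
  fun t₁ h₁ t₂ h₂ h => by
    rw [hp t₁ h₁, hp t₂ h₂]
    exact hP (div_lt_div_of_pos_left hc (ha.trans_le h₁.1) h)

section CriticalPoint

variable {g g' : ℝ → ℝ} {p₀ : ℝ}

theorem strictMonoOn_Ici_of_strictMono_deriv (hg : ∀ p, HasDerivAt g (g' p) p)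
    (hg' : StrictMono g') (hg'p₀ : g' p₀ = 0) : StrictMonoOn g (Ici p₀) := by
  refine strictMonoOn_of_deriv_pos (convex_Ici p₀)
    (fun p _ => (hg p).continuousAt.continuousWithinAt) fun p hp => ?_
  rw [interior_Ici] at hp
  rw [(hg p).deriv, ← hg'p₀]
  exact hg' hp

theorem tendsto_atTop_of_strictMono_deriv (hg : ∀ p, HasDerivAt g (g' p) p)
    (hg' : StrictMono g') (hg'p₀ : g' p₀ = 0) : Tendsto g atTop atTop := by
  set p₁ := p₀ + 1
  have hslope : 0 < g' p₁ := hg'p₀ ▸ hg' (lt_add_one p₀)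
  have hlin : ∀ p ∈ Ici p₁, g' p₁ * (p - p₁) + g p₁ ≤ g p := fun p hp => by
    have := (convex_Ici p₁).mul_sub_le_image_sub_of_le_deriv
      (fun q _ => (hg q).continuousAt.continuousWithinAt)
      (fun q _ => (hg q).differentiableAt.differentiableWithinAt)
      (fun q hq => by rw [interior_Ici] at hq; exact (hg q).deriv ▸ (hg' hq).le)
      p₁ (mem_Ici.2 le_rfl) p hp hp
    linarith
  refine tendsto_atTop_mono' _ (eventually_ge_atTop p₁ |>.mono hlin) ?_
  exact tendsto_atTop_add_const_right _ _
    ((tendsto_atTop_add_const_right _ _ tendsto_id).const_mul_atTop hslope)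

theorem exists_inverse_Ioi_of_strictMono_deriv (hg : ∀ p, HasDerivAt g (g' p) p)
    (hg' : StrictMono g') (hgp₀ : g p₀ = 0) (hg'p₀ : g' p₀ = 0) :
    ∃ P : ℝ → ℝ, StrictMono P ∧ (∀ p, p₀ ≤ p → P (g p) = p) ∧
      ∀ s, 0 < s → p₀ < P s ∧ g (P s) = s ∧ HasDerivAt P (g' (P s))⁻¹ s := by
  obtain ⟨e, he⟩ := (strictMonoOn_Ici_of_strictMono_deriv hg hg' hg'p₀).exists_orderIso_eqOn_Ici <|
    intermediate_value_Ici (fun p _ => (hg p).continuousAt.continuousWithinAt)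
      (tendsto_atTop_of_strictMono_deriv hg hg' hg'p₀)
  refine ⟨e.symm, e.symm.strictMono, fun p hp => by rw [← he hp, e.symm_apply_apply],
    fun s hs => ?_⟩
  have hlt : p₀ < e.symm s := by
    rwa [← e.lt_iff_lt, e.apply_symm_apply, he (mem_Ici.2 le_rfl), hgp₀]
  have he' : HasDerivAt e (g' (e.symm s)) (e.symm s) := (hg _).congr_of_eventuallyEq <|
    eventuallyEq_of_mem (Ioi_mem_nhds hlt) fun p hp => he (mem_Ici.2 hp.le)
  refine ⟨hlt, by rw [← he hlt.le, e.apply_symm_apply], ?_⟩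
  exact he'.of_local_left_inverse e.symm.continuous.continuousAt
    (hg'p₀ ▸ (hg' hlt).ne') (Eventually.of_forall e.apply_symm_apply)

end CriticalPoint

theorem lamF_eq_slope (f : ℝ → ℝ) (u v : ℝ) : lamF f u v = slope f u v :=
  (slope_def_field f u v).symm

def fenchelYoungGap (f finv : ℝ → ℝ) (b p : ℝ) : ℝ := f b - f (finv p) - p * (b - finv p)

section FenchelYoungGap

variable {f finv : ℝ → ℝ} {b : ℝ}

theorem fenchelYoungGap_add_mul_sub (p : ℝ) :
    fenchelYoungGap f finv b p + (finv p - b) * (lamF f (finv p) b - p) = 0 := by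
  have := sub_smul_slope f (finv p) b
  rw [smul_eq_mul, vsub_eq_sub] at this
  rw [fenchelYoungGap, lamF_eq_slope]
  linear_combination (-1 : ℝ) * this

theorem hasDerivAt_fenchelYoungGap (hf : Differentiable ℝ f) (hfinv : ∀ p, deriv f (finv p) = p)
    {d p : ℝ} (hd : HasDerivAt finv d p) :
    HasDerivAt (fenchelYoungGap f finv b) (finv p - b) p := by
  have := (((hf (finv p)).hasDerivAt.comp p hd).const_sub (f b)).sub
    ((hasDerivAt_id p).mul (hd.const_sub b))
  refine this.congr_deriv ?_
  rw [hfinv, id]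
  ring

theorem fenchelYoungGap_deriv_of_eq {u : ℝ} (hfinv : finv (deriv f u) = u) (hfu : f b = f u) :
    fenchelYoungGap f finv b (deriv f u) = deriv f u * (u - b) := by
  rw [fenchelYoungGap, hfinv, hfu]
  ring

end FenchelYoungGap

section LeftShock

variable {f finv : ℝ → ℝ} {T B Bbar R : ℝ} {y P : ℝ → ℝ}

theorem LeftShockSol.continuousOn (hy : LeftShockSol f finv T B Bbar R y) :
    ContinuousOn y (Icc (R / deriv f B) T) :=
  fun t ht => (hy.2 t ht).continuousWithinAt

theorem LeftShockSol.div_left_eq (hy : LeftShockSol f finv T B Bbar R y) (hR : R ≠ 0) :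
    (y (R / deriv f B) + R) / (R / deriv f B) = deriv f B := by
  rw [hy.1, zero_add, div_div_cancel₀ hR]

theorem LeftShockSol.mul_fenchelYoungGap_eq (hy : LeftShockSol f finv T B Bbar R y)
    (hR : 0 < R) (hfB : 0 < deriv f B) (hfBB : f Bbar = f B)
    (hfinv1 : ∀ u, finv (deriv f u) = u)
    (hG : ∀ p, HasDerivAt (fenchelYoungGap f finv Bbar) (finv p - Bbar) p) :
    ∀ t ∈ Icc (R / deriv f B) T,
      t * fenchelYoungGap f finv Bbar ((y t + R) / t) = R * (B - Bbar) := by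
  set I := Icc (R / deriv f B) T
  have ht₀ : 0 < R / deriv f B := div_pos hR hfB
  have hD : ∀ t ∈ I, HasDerivWithinAt (fun t => t * fenchelYoungGap f finv Bbar ((y t + R) / t))
      0 I t := by
    intro t ht
    have ht0 : t ≠ 0 := (ht₀.trans_le ht.1).ne'
    have hp := ((hy.2 t ht).add_const R).div (hasDerivWithinAt_id t I) ht0
    refine ((hasDerivWithinAt_id t I).mul ((hG _).comp_hasDerivWithinAt t hp)).congr_deriv ?_
    have := fenchelYoungGap_add_mul_sub (f := f) (finv := finv) (b := Bbar) ((y t + R) / t)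
    simp only [Function.comp_apply, Pi.div_apply, id]
    field_simp
    linear_combination t * this + (finv ((y t + R) / t) - Bbar) * (y t + R) * mul_inv_cancel₀ ht0
  have hconst := constant_of_has_deriv_right_zero (fun t ht => (hD t ht).continuousWithinAt)
    fun t ht => (hD t (Ico_subset_Icc_self ht)).mono_of_mem_nhdsWithin (Icc_mem_nhdsGE_of_mem ht)
  intro t ht
  rw [hconst t ht, hy.div_left_eq hR.ne', fenchelYoungGap_deriv_of_eq (hfinv1 B) hfBB]
  field_simp

theorem LeftShockSol.deriv_lt_div (hy : LeftShockSol f finv T B Bbar R y)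
    (hR : 0 < R) (hfB : 0 < deriv f B) (hBbarB : Bbar < B) (hfBB : f Bbar = f B)
    (hfinv : StrictMono finv) (hfinv1 : ∀ u, finv (deriv f u) = u)
    (hG : ∀ p, HasDerivAt (fenchelYoungGap f finv Bbar) (finv p - Bbar) p) :
    ∀ t ∈ Icc (R / deriv f B) T, deriv f Bbar < (y t + R) / t := by
  have ht₀ : 0 < R / deriv f B := div_pos hR hfB
  refine forall_lt_of_continuousOn_Icc_of_ne ?_ ?_ fun t ht h => ?_
  · exact (hy.continuousOn.add continuousOn_const).div continuousOn_id
      fun t ht => (ht₀.trans_le ht.1).ne'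
  · rw [hy.div_left_eq hR.ne', ← hfinv.lt_iff_lt, hfinv1, hfinv1]
    exact hBbarB
  · have := hy.mul_fenchelYoungGap_eq hR hfB hfBB hfinv1 hG t ht
    rw [h, fenchelYoungGap_deriv_of_eq (hfinv1 Bbar) rfl, sub_self, mul_zero, mul_zero] at this
    nlinarith

theorem LeftShockSol.div_eq_apply_div (hy : LeftShockSol f finv T B Bbar R y)
    (hR : 0 < R) (hfB : 0 < deriv f B) (hBbarB : Bbar < B) (hfBB : f Bbar = f B)
    (hfinv : StrictMono finv) (hfinv1 : ∀ u, finv (deriv f u) = u)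
    (hG : ∀ p, HasDerivAt (fenchelYoungGap f finv Bbar) (finv p - Bbar) p)
    (hPG : ∀ p, deriv f Bbar ≤ p → P (fenchelYoungGap f finv Bbar p) = p) :
    ∀ t ∈ Icc (R / deriv f B) T, (y t + R) / t = P (R * (B - Bbar) / t) := by
  intro t ht
  have ht0 : t ≠ 0 := ((div_pos hR hfB).trans_le ht.1).ne'
  rw [← hy.mul_fenchelYoungGap_eq hR hfB hfBB hfinv1 hG t ht, mul_div_cancel_left₀ _ ht0,
    hPG _ (hy.deriv_lt_div hR hfB hBbarB hfBB hfinv hfinv1 hG t ht).le]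

theorem leftShockSol_of_rightInverse (hR : 0 < R) (hfB : 0 < deriv f B) (hBbarB : Bbar < B)
    (hfBB : f Bbar = f B) (hfinv : StrictMono finv) (hfinv1 : ∀ u, finv (deriv f u) = u)
    (hPG : ∀ p, deriv f Bbar ≤ p → P (fenchelYoungGap f finv Bbar p) = p)
    (hPs : ∀ s, 0 < s → deriv f Bbar < P s ∧ fenchelYoungGap f finv Bbar (P s) = s ∧
      HasDerivAt P (finv (P s) - Bbar)⁻¹ s) :
    LeftShockSol f finv T B Bbar R (fun t => t * P (R * (B - Bbar) / t) - R) := by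
  set c := R * (B - Bbar) with hc_def
  have hc : 0 < c := mul_pos hR (sub_pos.2 hBbarB)
  constructor
  · have hc₀ : c / (R / deriv f B) = fenchelYoungGap f finv Bbar (deriv f B) := by
      rw [fenchelYoungGap_deriv_of_eq (hfinv1 B) hfBB, hc_def]
      field_simp
    have hmono : deriv f Bbar ≤ deriv f B := by
      rw [← hfinv.le_iff_le, hfinv1, hfinv1]
      exact hBbarB.le
    beta_reduce
    rw [hc₀, hPG _ hmono, div_mul_cancel₀ _ hfB.ne', sub_self]
  · intro t ht
    have ht0 : 0 < t := (div_pos hR hfB).trans_le ht.1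
    obtain ⟨hPt, hGt, hDt⟩ := hPs (c / t) (div_pos hc ht0)
    have hv : finv (P (c / t)) - Bbar ≠ 0 := sub_ne_zero.2 (hfinv1 Bbar ▸ hfinv hPt).ne'
    have hdiv := (hasDerivAt_const t c).div (hasDerivAt_id t) ht0.ne'
    have := ((hasDerivAt_id t).mul (hDt.comp t hdiv)).sub_const R
    have hquot : (t * P (c / t) - R + R) / t = P (c / t) := by
      rw [sub_add_cancel, mul_div_cancel_left₀ _ ht0.ne']
    simp only [hquot]
    refine (this.congr_deriv ?_).hasDerivWithinAt
    have := fenchelYoungGap_add_mul_sub (f := f) (finv := finv) (b := Bbar) (P (c / t))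
    rw [hGt] at this
    field_simp at this
    simp only [Function.comp_apply, id]
    field_simp
    linear_combination (-1 : ℝ) * this

theorem LeftShockSol.hasDerivWithinAt_interior (hy : LeftShockSol f finv T B Bbar R y) :
    ∀ t ∈ interior (Icc (R / deriv f B) T),
      HasDerivWithinAt y (lamF f (finv ((y t + R) / t)) Bbar)
        (interior (Icc (R / deriv f B) T)) t :=
  fun t ht => (hy.2 t (interior_subset ht)).mono interior_subset

theorem LeftShockSol.strictAntiOn (hy : LeftShockSol f finv T B Bbar R y)
    (hneg : ∀ t ∈ Ioo (R / deriv f B) T, lamF f (finv ((y t + R) / t)) Bbar < 0) :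
    StrictAntiOn y (Icc (R / deriv f B) T) :=
  strictAntiOn_of_hasDerivWithinAt_neg (convex_Icc _ _) hy.continuousOn
    hy.hasDerivWithinAt_interior (by rwa [interior_Icc])

theorem LeftShockSol.strictMonoOn_sub_mul (hy : LeftShockSol f finv T B Bbar R y) {m : ℝ}
    (hgt : ∀ t ∈ Ioo (R / deriv f B) T, m < lamF f (finv ((y t + R) / t)) Bbar) :
    StrictMonoOn (fun t => y t - t * m) (Icc (R / deriv f B) T) := by
  refine strictMonoOn_of_hasDerivWithinAt_pos (convex_Icc _ _)
    (hy.continuousOn.sub (continuousOn_id.mul continuousOn_const))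
    (fun t ht => (hy.hasDerivWithinAt_interior t ht).sub ((hasDerivWithinAt_id _ _).mul_const m))
    fun t ht => ?_
  rw [interior_Icc] at ht
  linarith [hgt t ht]

theorem LeftShockSol.bounds_of_strictAntiOn (hy : LeftShockSol f finv T B Bbar R y)
    (hR : 0 < R) (hfB : 0 < deriv f B) (hT : R / deriv f B < T) (hf : Differentiable ℝ f)
    (hconv : StrictConvexOn ℝ univ f) (hBbar : deriv f Bbar < 0) (hfBB : f Bbar = f B)
    (hfinvB : finv (deriv f B) = B)
    (hv : StrictAntiOn (fun t => finv ((y t + R) / t)) (Icc (R / deriv f B) T))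
    (hvB : ∀ t ∈ Icc (R / deriv f B) T, Bbar < finv ((y t + R) / t)) :
    (∀ t ∈ Icc (R / deriv f B) T, T * deriv f Bbar < y t ∧ y t ≤ 0) ∧
    (∀ t ∈ Ioc (R / deriv f B) T, y t < 0) ∧
    (∀ t ∈ Icc (R / deriv f B) T, lamF f (finv ((y t + R) / t)) Bbar ≤ 0) ∧
    StrictAntiOn (fun t => lamF f (finv ((y t + R) / t)) Bbar) (Icc (R / deriv f B) T) ∧
    y T ∈ Ioo (T * deriv f Bbar) 0 := by
  have ht₀ : R / deriv f B ∈ Icc (R / deriv f B) T := left_mem_Icc.2 hT.le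
  have hspeed : StrictAntiOn (fun t => lamF f (finv ((y t + R) / t)) Bbar)
      (Icc (R / deriv f B) T) :=
    (hconv.strictAntiOn_slope_comp hv hvB).congr fun t _ => by
      simp only [lamF_eq_slope, slope_comm f Bbar]
  have hspeed₀ : lamF f (finv ((y (R / deriv f B) + R) / (R / deriv f B))) Bbar = 0 := by
    rw [hy.div_left_eq hR.ne', hfinvB, lamF, hfBB, sub_self, zero_div]
  have hy_anti := hy.strictAntiOn fun t ht => hspeed₀ ▸ hspeed ht₀ (Ioo_subset_Icc_self ht) ht.1
  have hy_neg : ∀ t ∈ Ioc (R / deriv f B) T, y t < 0 :=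
    fun t ht => hy.1 ▸ hy_anti ht₀ (Ioc_subset_Icc_self ht) ht.1
  have hy_low : ∀ t ∈ Icc (R / deriv f B) T, T * deriv f Bbar < y t := by
    have hgt : ∀ t ∈ Ioo (R / deriv f B) T, deriv f Bbar < lamF f (finv ((y t + R) / t)) Bbar :=
      fun t ht => by
        rw [lamF_eq_slope, slope_comm]
        exact hconv.deriv_lt_slope (mem_univ _) (mem_univ _) (hvB t (Ioo_subset_Icc_self ht))
          (hf Bbar)
    intro t ht
    have := (hy.strictMonoOn_sub_mul hgt).monotoneOn ht₀ ht ht.1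
    simp only [hy.1] at this
    nlinarith [mul_le_mul_of_nonpos_right ht.2 hBbar.le, mul_neg_of_pos_of_neg
      (div_pos hR hfB) hBbar]
  refine ⟨fun t ht => ⟨hy_low t ht, hy.1 ▸ hy_anti.antitoneOn ht₀ ht ht.1⟩, hy_neg,
    fun t ht => hspeed₀ ▸ hspeed.antitoneOn ht₀ ht ht.1, hspeed, hy_low T (right_mem_Icc.2 hT.le),
    hy_neg T (right_mem_Ioc.2 hT)⟩

theorem LeftShockSol.apriori_bounds (hy : LeftShockSol f finv T B Bbar R y)
    (hR : 0 < R) (hfB : 0 < deriv f B) (hT : R / deriv f B < T) (hBbarB : Bbar < B)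
    (hf : Differentiable ℝ f) (hconv : StrictConvexOn ℝ univ f) (hBbar : deriv f Bbar < 0)
    (hfBB : f Bbar = f B) (hfinv : StrictMono finv) (hfinv1 : ∀ u, finv (deriv f u) = u)
    (hG : ∀ p, HasDerivAt (fenchelYoungGap f finv Bbar) (finv p - Bbar) p)
    (hP : StrictMono P) (hPG : ∀ p, deriv f Bbar ≤ p → P (fenchelYoungGap f finv Bbar p) = p) :
    (∀ t ∈ Icc (R / deriv f B) T, t * deriv f Bbar < y t + R) ∧
    (∀ t ∈ Icc (R / deriv f B) T, Bbar < finv ((y t + R) / t)) ∧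
    (∀ t ∈ Icc (R / deriv f B) T, T * deriv f Bbar < y t ∧ y t ≤ 0) ∧
    (∀ t ∈ Ioc (R / deriv f B) T, y t < 0) ∧
    (∀ t ∈ Icc (R / deriv f B) T, lamF f (finv ((y t + R) / t)) Bbar ≤ 0) ∧
    StrictAntiOn (fun t => lamF f (finv ((y t + R) / t)) Bbar) (Icc (R / deriv f B) T) ∧
    y T ∈ Ioo (T * deriv f Bbar) 0 := by
  have ht₀ : 0 < R / deriv f B := div_pos hR hfB
  have hp := hy.deriv_lt_div hR hfB hBbarB hfBB hfinv hfinv1 hG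
  have hvB : ∀ t ∈ Icc (R / deriv f B) T, Bbar < finv ((y t + R) / t) :=
    fun t ht => hfinv1 Bbar ▸ hfinv (hp t ht)
  have hv := hfinv.comp_strictAntiOn <| strictAntiOn_of_eq_comp_div hP
    (mul_pos hR (sub_pos.2 hBbarB)) ht₀ (hy.div_eq_apply_div hR hfB hBbarB hfBB hfinv hfinv1 hG hPG)
  refine ⟨fun t ht => ?_, hvB,
    hy.bounds_of_strictAntiOn hR hfB hT hf hconv hBbar hfBB (hfinv1 B) hv hvB⟩
  rw [mul_comm, ← lt_div_iff₀ (ht₀.trans_le ht.1)]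
  exact hp t ht

end LeftShock

theorem left_backward_shock_wellposed_general
    (f : ℝ → ℝ) (a : ℝ) (ha : 0 < a) (hf : ContDiff ℝ 2 f)
    (hf2 : ∀ u : ℝ, a ≤ deriv (deriv f) u)
    (θ : ℝ) (hθ : deriv f θ = 0)
    (finv : ℝ → ℝ) (hfinv1 : ∀ u : ℝ, finv (deriv f u) = u)
    (hfinv2 : ∀ p : ℝ, deriv f (finv p) = p)
    (T : ℝ)
    (B Bbar : ℝ) (hB : θ < B) (hBbar1 : Bbar ≤ θ) (hBbar2 : f Bbar = f B)
    (R : ℝ) (hR : R ∈ Ioo (0:ℝ) (T * deriv f B)) :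
    (0 < R / deriv f B ∧ R / deriv f B < T) ∧
    (∃ y : ℝ → ℝ, LeftShockSol f finv T B Bbar R y ∧
        ∀ y' : ℝ → ℝ, LeftShockSol f finv T B Bbar R y' →
          EqOn y' y (Icc (R / deriv f B) T)) ∧
    (∀ y : ℝ → ℝ, LeftShockSol f finv T B Bbar R y →
        (∀ t ∈ Icc (R / deriv f B) T, t * deriv f Bbar < y t + R) ∧
        (∀ t ∈ Icc (R / deriv f B) T, Bbar < finv ((y t + R) / t)) ∧
        (∀ t ∈ Icc (R / deriv f B) T, T * deriv f Bbar < y t ∧ y t ≤ 0) ∧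
        (∀ t ∈ Ioc (R / deriv f B) T, y t < 0) ∧
        (∀ t ∈ Icc (R / deriv f B) T, lamF f (finv ((y t + R) / t)) Bbar ≤ 0) ∧
        StrictAntiOn (fun t => lamF f (finv ((y t + R) / t)) Bbar)
          (Icc (R / deriv f B) T) ∧
        y T ∈ Ioo (T * deriv f Bbar) 0) := by
  obtain ⟨hR, hRT⟩ := hR
  obtain ⟨hf1, -, hdf⟩ := (contDiff_succ_iff_deriv (n := 1)).mp hf
  have hpos : ∀ u, 0 < deriv (deriv f) u := fun u => ha.trans_le (hf2 u)
  have hmono : StrictMono (deriv f) := strictMono_of_deriv_pos hpos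
  have hconv := hmono.strictConvexOn_univ_of_deriv hf1.continuous
  obtain ⟨hfinv, hfinvD⟩ := strictMono_and_hasDerivAt_rightInverse
    (fun u => (hdf.differentiable one_ne_zero u).hasDerivAt) hpos hfinv2
  have hfB : 0 < deriv f B := hθ ▸ hmono hB
  have hT : R / deriv f B < T := (div_lt_iff₀ hfB).2 (by linarith)
  have hBbarθ : Bbar < θ := hBbar1.lt_of_ne fun h =>
    (hconv.apply_lt_of_deriv_eq_zero (hf1 θ) hθ hB).ne (h ▸ hBbar2)
  have hBbarB : Bbar < B := hBbarθ.trans hB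
  have hG : ∀ p, HasDerivAt (fenchelYoungGap f finv Bbar) (finv p - Bbar) p :=
    fun p => hasDerivAt_fenchelYoungGap hf1 hfinv2 (hfinvD p)
  obtain ⟨P, hP, hPG, hPs⟩ := exists_inverse_Ioi_of_strictMono_deriv hG
    (fun p q h => sub_lt_sub_right (hfinv h) Bbar)
    (by rw [fenchelYoungGap_deriv_of_eq (hfinv1 Bbar) rfl, sub_self, mul_zero])
    (by rw [hfinv1, sub_self])
  refine ⟨⟨div_pos hR hfB, hT⟩,
    ⟨_, leftShockSol_of_rightInverse hR hfB hBbarB hBbar2 hfinv hfinv1 hPG hPs,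
      fun y hy t ht => ?_⟩,
    fun y hy => hy.apriori_bounds hR hfB hT hBbarB hf1 hconv (hθ ▸ hmono hBbarθ) hBbar2 hfinv
      hfinv1 hG hP hPG⟩
  rw [← hy.div_eq_apply_div hR hfB hBbarB hBbar2 hfinv hfinv1 hG hPG t ht,
    mul_div_cancel₀ _ ((div_pos hR hfB).trans_le ht.1).ne', add_sub_cancel_right]

/-- **Section 3.1**: well-posedness and a priori bounds for the left backward-shock
Cauchy problem. -/
theorem left_backward_shock_wellposed
    (f : ℝ → ℝ) (a : ℝ) (ha : 0 < a) (hf : ContDiff ℝ 2 f)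
    (hf2 : ∀ u : ℝ, a ≤ deriv (deriv f) u)
    (θ : ℝ) (hθ : deriv f θ = 0)
    (finv : ℝ → ℝ) (hfinv1 : ∀ u : ℝ, finv (deriv f u) = u)
    (hfinv2 : ∀ p : ℝ, deriv f (finv p) = p)
    (T : ℝ) (hT : 0 < T)
    (B Bbar : ℝ) (hB : θ < B) (hBbar1 : Bbar ≤ θ) (hBbar2 : f Bbar = f B)
    (R : ℝ) (hR : R ∈ Ioo (0:ℝ) (T * deriv f B)) :
    (0 < R / deriv f B ∧ R / deriv f B < T) ∧
    (∃ y : ℝ → ℝ, LeftShockSol f finv T B Bbar R y ∧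
        ∀ y' : ℝ → ℝ, LeftShockSol f finv T B Bbar R y' →
          EqOn y' y (Icc (R / deriv f B) T)) ∧
    (∀ y : ℝ → ℝ, LeftShockSol f finv T B Bbar R y →
        (∀ t ∈ Icc (R / deriv f B) T, t * deriv f Bbar < y t + R) ∧
        (∀ t ∈ Icc (R / deriv f B) T, Bbar < finv ((y t + R) / t)) ∧
        (∀ t ∈ Icc (R / deriv f B) T, T * deriv f Bbar < y t ∧ y t ≤ 0) ∧
        (∀ t ∈ Ioc (R / deriv f B) T, y t < 0) ∧
        (∀ t ∈ Icc (R / deriv f B) T, lamF f (finv ((y t + R) / t)) Bbar ≤ 0) ∧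
        StrictAntiOn (fun t => lamF f (finv ((y t + R) / t)) Bbar)
          (Icc (R / deriv f B) T) ∧
        y T ∈ Ioo (T * deriv f Bbar) 0) :=
  left_backward_shock_wellposed_general f a ha hf hf2 θ hθ finv hfinv1 hfinv2 T B Bbar hB hBbar1
    hBbar2 R hR
end
end

section
/- Duality of backward shocks, first identity (Lemma 3.1, first equality of (3.14)): Let f, θ, T be as in the context, let B > θ and R ∈ (0, T·f'(B)), and let y : [R/f'(B), T] → ℝ be a solution of the left backward-shock Cauchy problem with data (R,B). Set L := y(T) (which lies in (T·f'(B̄), 0)) and s₀ := L/f'(B̄) ∈ (0,T). Note that B̄ < θ, that (for A := B̄) the point Ā equals B, and that L ∈ (T·f'(B̄), 0), so the right backward-shock Cauchy problem with data (L, B̄) makes sense: it asks for x : [s₀,T] → ℝ with x(s₀) = 0 and x'(t) = λ((f')⁻¹((x(t)+L)/t), B). Then every solution x of this problem satisfies x(T) = R. -/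
/-!
Along a backward shock `z` with data `(K, b)` and partner state `c` (`f c = f b`), put
`u(t) = (f')⁻¹((z t + K) / t)`. The shock equation makes `t · D(c, u(t))` constant, where
`D(c, w) = f c - f w - f'(w) (c - w)` is the Bregman divergence of `f`; since `u = b` at the
starting time, the constant is `K (b - c)`.

For `y` (`c = B̄`) and `x` (`c = B`) with end states `u` and `v` at time `T`, the identity
`D(B, w) - D(B̄, w) = f'(w) (B̄ - B)` and `f'(u) = (y T + R) / T` give `D(B, u) = D(B, v)`.
Both `u` and `v` lie left of `B`, where `D(B, ·)` is strictly decreasing, so `u = v`, that is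
`x T = R`.
-/

noncomputable section

open Set Filter

variable {f finv : ℝ → ℝ}

lemma sub_mul_lamF (f : ℝ → ℝ) (u c : ℝ) : (c - u) * lamF f u c = f c - f u := by
  rcases eq_or_ne c u with rfl | h
  · simp
  · rw [lamF, mul_div_cancel₀ _ (sub_ne_zero.2 h)]

lemma constant_of_hasDerivWithinAt_Icc_zero {g : ℝ → ℝ} {a b : ℝ}
    (h : ∀ x ∈ Icc a b, HasDerivWithinAt g 0 (Icc a b) x) : ∀ x ∈ Icc a b, g x = g a :=
  constant_of_has_deriv_right_zero (fun x hx => (h x hx).continuousWithinAt) fun x hx =>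
    (h x (Ico_subset_Icc_self hx)).mono_of_mem_nhdsWithin
      (mem_of_superset (Icc_mem_nhdsGE_of_mem ⟨le_rfl, hx.2⟩) (Icc_subset_Icc hx.1 le_rfl))

def bregmanDiv (f : ℝ → ℝ) (c w : ℝ) : ℝ := f c - f w - deriv f w * (c - w)

@[simp]
lemma bregmanDiv_self (c : ℝ) : bregmanDiv f c c = 0 := by
  simp [bregmanDiv]

lemma bregmanDiv_of_eq {b c : ℝ} (h : f c = f b) : bregmanDiv f c b = deriv f b * (b - c) := by
  rw [bregmanDiv, h]
  ring

lemma bregmanDiv_sub_bregmanDiv {c c' : ℝ} (h : f c = f c') (w : ℝ) :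
    bregmanDiv f c w - bregmanDiv f c' w = deriv f w * (c' - c) := by
  rw [bregmanDiv, bregmanDiv, h]
  ring

lemma hasDerivAt_bregmanDiv {w : ℝ} (hf : DifferentiableAt ℝ f w)
    (hf' : DifferentiableAt ℝ (deriv f) w) (c : ℝ) :
    HasDerivAt (bregmanDiv f c) (-(deriv (deriv f) w * (c - w))) w := by
  have h : HasDerivAt (fun w => f c - f w - deriv f w * (c - w)) _ w :=
    ((hasDerivAt_const w (f c)).sub hf.hasDerivAt).sub
      (hf'.hasDerivAt.mul ((hasDerivAt_const w c).sub (hasDerivAt_id' w)))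
  exact h.congr_deriv (by ring)

lemma differentiable_deriv_of_deriv_deriv_pos (hf2 : ∀ u, 0 < deriv (deriv f) u) :
    Differentiable ℝ (deriv f) :=
  fun u => differentiableAt_of_deriv_ne_zero (hf2 u).ne'

lemma strictAntiOn_bregmanDiv (hf : Differentiable ℝ f) (hf2 : ∀ u, 0 < deriv (deriv f) u)
    (c : ℝ) : StrictAntiOn (bregmanDiv f c) (Iic c) := by
  have hD := fun w => hasDerivAt_bregmanDiv (hf w) (differentiable_deriv_of_deriv_deriv_pos hf2 w) c
  refine strictAntiOn_of_deriv_neg (convex_Iic c)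
    (fun w _ => (hD w).continuousAt.continuousWithinAt) fun w hw => ?_
  rw [interior_Iic] at hw
  rw [(hD w).deriv, neg_lt_zero]
  exact mul_pos (hf2 w) (sub_pos.2 hw)

lemma strictMonoOn_bregmanDiv (hf : Differentiable ℝ f) (hf2 : ∀ u, 0 < deriv (deriv f) u)
    (c : ℝ) : StrictMonoOn (bregmanDiv f c) (Ici c) := by
  have hD := fun w => hasDerivAt_bregmanDiv (hf w) (differentiable_deriv_of_deriv_deriv_pos hf2 w) c
  refine strictMonoOn_of_deriv_pos (convex_Ici c)
    (fun w _ => (hD w).continuousAt.continuousWithinAt) fun w hw => ?_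
  rw [interior_Ici] at hw
  rw [(hD w).deriv, neg_pos]
  exact mul_neg_of_pos_of_neg (hf2 w) (sub_neg.2 hw)

lemma finv_deriv_eq (hf2 : ∀ u, 0 < deriv (deriv f) u) (hfinv : ∀ p, deriv f (finv p) = p)
    (u : ℝ) : finv (deriv f u) = u :=
  (strictMono_of_deriv_pos hf2).injective (hfinv _)

lemma strictMono_finv (hf2 : ∀ u, 0 < deriv (deriv f) u)
    (hfinv : ∀ p, deriv f (finv p) = p) : StrictMono finv := fun p q hpq =>
  (strictMono_of_deriv_pos hf2).lt_iff_lt.1 (by rwa [hfinv, hfinv])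

lemma continuous_finv (hf2 : ∀ u, 0 < deriv (deriv f) u)
    (hfinv : ∀ p, deriv f (finv p) = p) : Continuous finv :=
  (strictMono_finv hf2 hfinv).monotone.continuous_of_surjective fun u =>
    ⟨deriv f u, finv_deriv_eq hf2 hfinv u⟩

lemma hasDerivAt_finv (hf2 : ∀ u, 0 < deriv (deriv f) u)
    (hfinv : ∀ p, deriv f (finv p) = p) (p : ℝ) :
    HasDerivAt finv (deriv (deriv f) (finv p))⁻¹ p :=
  HasDerivAt.of_local_left_inverse (continuous_finv hf2 hfinv).continuousAt
    (differentiable_deriv_of_deriv_deriv_pos hf2 _).hasDerivAt (hf2 _).ne'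
    (Eventually.of_forall hfinv)

section Shock

variable {z : ℝ → ℝ} {K b c T : ℝ}

lemma hasDerivWithinAt_add_const_div_self {S : Set ℝ} {t lam : ℝ} (ht : t ≠ 0)
    (hz : HasDerivWithinAt z lam S t) :
    HasDerivWithinAt (fun s => (z s + K) / s) ((lam - (z t + K) / t) / t) S t :=
  ((hz.add_const K).div (hasDerivWithinAt_id t S) ht).congr_deriv (by simp only [id]; field_simp)

lemma hasDerivWithinAt_mul_bregmanDiv_shock (hf : Differentiable ℝ f)
    (hf2 : ∀ u, 0 < deriv (deriv f) u) (hfinv : ∀ p, deriv f (finv p) = p)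
    {S : Set ℝ} {t : ℝ} (ht : t ≠ 0)
    (hz : HasDerivWithinAt z (lamF f (finv ((z t + K) / t)) c) S t) :
    HasDerivWithinAt (fun s => s * bregmanDiv f c (finv ((z s + K) / s))) 0 S t := by
  set u := finv ((z t + K) / t)
  have hu : HasDerivWithinAt (fun s => finv ((z s + K) / s))
      ((deriv (deriv f) u)⁻¹ * ((lamF f u c - (z t + K) / t) / t)) S t :=
    (hasDerivAt_finv hf2 hfinv _).comp_hasDerivWithinAt t
      (hasDerivWithinAt_add_const_div_self ht hz)
  have hD := (hasDerivAt_bregmanDiv (hf u) (differentiable_deriv_of_deriv_deriv_pos hf2 u)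
    c).comp_hasDerivWithinAt t hu
  refine ((hasDerivWithinAt_id t S).mul hD).congr_deriv ?_
  have hspeed : (z t + K) / t = deriv f u := (hfinv _).symm
  have hlam := sub_mul_lamF f u c
  have hf2u := (hf2 u).ne'
  -- `(t D(c, u))' = D(c, u) - (c - u) (λ - f'(u))`, and `(c - u) λ = f c - f u`.
  change 1 * bregmanDiv f c u + t * (-(deriv (deriv f) u * (c - u)) *
    ((deriv (deriv f) u)⁻¹ * ((lamF f u c - (z t + K) / t) / t))) = 0
  rw [hspeed, bregmanDiv]
  field_simp
  linear_combination -hlam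

lemma mul_bregmanDiv_shock_eq (hf : Differentiable ℝ f) (hf2 : ∀ u, 0 < deriv (deriv f) u)
    (hfinv : ∀ p, deriv f (finv p) = p) (hcb : f c = f b) (ht₀ : 0 < K / deriv f b)
    (hz0 : z (K / deriv f b) = 0)
    (hz : ∀ t ∈ Icc (K / deriv f b) T,
      HasDerivWithinAt z (lamF f (finv ((z t + K) / t)) c) (Icc (K / deriv f b) T) t) :
    ∀ t ∈ Icc (K / deriv f b) T, t * bregmanDiv f c (finv ((z t + K) / t)) = K * (b - c) := by
  obtain ⟨hK, hfb⟩ := div_ne_zero_iff.1 ht₀.ne'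
  intro t ht
  rw [constant_of_hasDerivWithinAt_Icc_zero (fun s hs => hasDerivWithinAt_mul_bregmanDiv_shock
    hf hf2 hfinv (ht₀.trans_le hs.1).ne' (hz s hs)) t ht, hz0, zero_add, div_div_cancel₀ hK,
    finv_deriv_eq hf2 hfinv, bregmanDiv_of_eq hcb]
  field_simp

lemma finv_shock_lt (hf : Differentiable ℝ f) (hf2 : ∀ u, 0 < deriv (deriv f) u)
    (hfinv : ∀ p, deriv f (finv p) = p) (hcb : f c = f b) (hbc : b < c)
    (ht₀ : 0 < K / deriv f b) (hz0 : z (K / deriv f b) = 0)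
    (hz : ∀ t ∈ Icc (K / deriv f b) T,
      HasDerivWithinAt z (lamF f (finv ((z t + K) / t)) c) (Icc (K / deriv f b) T) t) :
    ∀ t ∈ Icc (K / deriv f b) T, finv ((z t + K) / t) < c := by
  have hK : K ≠ 0 := (div_ne_zero_iff.1 ht₀.ne').1
  have hinv := mul_bregmanDiv_shock_eq hf hf2 hfinv hcb ht₀ hz0 hz
  have hspeed : ContinuousOn (fun s => (z s + K) / s) (Icc (K / deriv f b) T) :=
    (ContinuousOn.add (fun s hs => (hz s hs).continuousWithinAt) continuousOn_const).div
      continuousOn_id fun s hs => (ht₀.trans_le hs.1).ne'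
  intro t ht
  -- otherwise, by continuity, the state passes through `c`, where the invariant vanishes
  by_contra! hct
  have hstart : (z (K / deriv f b) + K) / (K / deriv f b) = deriv f b := by
    rw [hz0, zero_add, div_div_cancel₀ hK]
  have hmem : deriv f c ∈ Icc ((z (K / deriv f b) + K) / (K / deriv f b)) ((z t + K) / t) := by
    rw [hstart, ← hfinv ((z t + K) / t)]
    exact ⟨(strictMono_of_deriv_pos hf2 hbc).le, (strictMono_of_deriv_pos hf2).monotone hct⟩
  obtain ⟨τ, hτ, hτc⟩ :=
    intermediate_value_Icc ht.1 (hspeed.mono (Icc_subset_Icc le_rfl ht.2)) hmem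
  have h := hinv τ ⟨hτ.1, hτ.2.trans ht.2⟩
  beta_reduce at hτc
  rw [hτc, finv_deriv_eq hf2 hfinv, bregmanDiv_self, mul_zero] at h
  exact mul_ne_zero hK (sub_ne_zero.2 hbc.ne) h.symm

lemma lt_of_mul_bregmanDiv_eq (hf : Differentiable ℝ f) (hf2 : ∀ u, 0 < deriv (deriv f) u)
    (hcb : f c = f b) (hcb' : c < b) (hT : 0 < T) (hK : K < T * deriv f b) {u : ℝ}
    (h : T * bregmanDiv f c u = K * (b - c)) : u < b := by
  by_contra! hbu
  have hmono := (strictMonoOn_bregmanDiv hf hf2 c).monotoneOn hcb'.le (hcb'.le.trans hbu) hbu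
  rw [bregmanDiv_of_eq hcb] at hmono
  nlinarith [mul_le_mul_of_nonneg_left hmono hT.le, mul_lt_mul_of_pos_right hK (sub_pos.2 hcb')]

end Shock

theorem backward_shock_duality_first_general
    (f : ℝ → ℝ) (a : ℝ) (ha : 0 < a) (hf : ContDiff ℝ 2 f)
    (hf2 : ∀ u : ℝ, a ≤ deriv (deriv f) u)
    (finv : ℝ → ℝ)
    (hfinv2 : ∀ p : ℝ, deriv f (finv p) = p)
    (T : ℝ) (hT : 0 < T)
    (B Bbar : ℝ) (hBbar2 : f Bbar = f B)
    (R : ℝ) (hR : R ∈ Ioo (0:ℝ) (T * deriv f B))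
    (y : ℝ → ℝ) (hy : LeftShockSol f finv T B Bbar R y)
    (hyT : y T ∈ Ioo (T * deriv f Bbar) 0)
    (x : ℝ → ℝ) (hx : RightShockSol f finv T Bbar B (y T) x) :
    x T = R := by
  have hf2' : ∀ u, 0 < deriv (deriv f) u := fun u => ha.trans_le (hf2 u)
  have hfd : Differentiable ℝ f := hf.differentiable (by norm_num)
  obtain ⟨hR0, hRT⟩ := hR
  obtain ⟨hLT, hL0⟩ := hyT
  have hfB : 0 < deriv f B := pos_of_mul_pos_right (hR0.trans hRT) hT.le
  have hfBbar : deriv f Bbar < 0 := neg_of_mul_neg_right (hLT.trans hL0) hT.le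
  have hBB : Bbar < B := (strictMono_of_deriv_pos hf2').lt_iff_lt.1 (hfBbar.trans hfB)
  set u := finv ((y T + R) / T)
  set v := finv ((x T + y T) / T)
  have hTy : T ∈ Icc (R / deriv f B) T := ⟨((div_lt_iff₀ hfB).2 hRT).le, le_rfl⟩
  have hTx : T ∈ Icc (y T / deriv f Bbar) T := ⟨((div_lt_iff_of_neg hfBbar).2 hLT).le, le_rfl⟩
  have hu : T * bregmanDiv f Bbar u = R * (B - Bbar) := mul_bregmanDiv_shock_eq hfd hf2' hfinv2
    hBbar2 (div_pos hR0 hfB) hy.1 hy.2 T hTy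
  have hv : T * bregmanDiv f B v = y T * (Bbar - B) := mul_bregmanDiv_shock_eq hfd hf2' hfinv2
    hBbar2.symm (div_pos_of_neg_of_neg hL0 hfBbar) hx.1 hx.2 T hTx
  have hvB : v < B := finv_shock_lt hfd hf2' hfinv2 hBbar2.symm hBB
    (div_pos_of_neg_of_neg hL0 hfBbar) hx.1 hx.2 T hTx
  have huB : u < B := lt_of_mul_bregmanDiv_eq hfd hf2' hBbar2 hBB hT hRT hu
  have hdiv : bregmanDiv f B u = bregmanDiv f B v := by
    have hdu : T * deriv f u = y T + R := by rw [hfinv2, mul_div_cancel₀ _ hT.ne']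
    apply mul_left_cancel₀ hT.ne'
    linear_combination T * bregmanDiv_sub_bregmanDiv hBbar2.symm u + hu + (Bbar - B) * hdu - hv
  have huv : u = v := (strictAntiOn_bregmanDiv hfd hf2' B).injOn huB.le hvB.le hdiv
  have hspeed := congrArg (deriv f) huv
  rw [hfinv2, hfinv2, div_left_inj' hT.ne'] at hspeed
  linarith

/-- **Lemma 3.1, first equality of (3.14)**: the right backward shock with data
`(y(T), B̄)` is dual to the left backward shock with data `(R, B)`. -/
theorem backward_shock_duality_first
    (f : ℝ → ℝ) (a : ℝ) (ha : 0 < a) (hf : ContDiff ℝ 2 f)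
    (hf2 : ∀ u : ℝ, a ≤ deriv (deriv f) u)
    (θ : ℝ) (hθ : deriv f θ = 0)
    (finv : ℝ → ℝ) (hfinv1 : ∀ u : ℝ, finv (deriv f u) = u)
    (hfinv2 : ∀ p : ℝ, deriv f (finv p) = p)
    (T : ℝ) (hT : 0 < T)
    (B Bbar : ℝ) (hB : θ < B) (hBbar1 : Bbar ≤ θ) (hBbar2 : f Bbar = f B)
    (R : ℝ) (hR : R ∈ Ioo (0:ℝ) (T * deriv f B))
    (y : ℝ → ℝ) (hy : LeftShockSol f finv T B Bbar R y)
    (hyT : y T ∈ Ioo (T * deriv f Bbar) 0)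
    (x : ℝ → ℝ) (hx : RightShockSol f finv T Bbar B (y T) x) :
    x T = R :=
  backward_shock_duality_first_general f a ha hf hf2 finv hfinv2 T hT B Bbar hBbar2 R hR y hy hyT x
    hx
end
end

section
/- Strict monotonicity of the terminal values of backward shocks (Lemma 3.1): Let f, θ, T be as in the context. (a) Fix B > θ; if 0 < R₁ < R₂ < T·f'(B) and y₁, y₂ are solutions of the left backward-shock Cauchy problems with data (R₁,B) and (R₂,B) respectively, then y₁(T) < y₂(T). (b) Fix A < θ; if T·f'(A) < L₁ < L₂ < 0 and x₁, x₂ are solutions of the right backward-shock Cauchy problems with data (L₁,A) and (L₂,A) respectively, then x₁(T) < x₂(T). -/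
/-!
Write `z = y + R` for a left backward shock. It starts on the line `z = t·f'(B)` and, by a barrier
argument, stays in the wedge `t·f'(B̄) < z ≤ t·f'(B)`; there `u = (f')⁻¹(z/t) ∈ (B̄, B]`, so
`y' = λ(u, B̄) ≤ λ(B, B̄) = 0` and `y` decreases. Hence at the later starting time `R₂/f'(B)` the
first shock satisfies `y₁ ≤ 0 = y₂`. Whenever `y₁ = y₂` afterwards, `z₂ - z₁ = R₂ - R₁ > 0`, and
since secant slopes of the strictly convex `f` increase, `y₂' > y₁'`: the difference `y₂ - y₁`
can never come back to zero. Right shocks of `f` are the left shocks of `u ↦ f (-u)`.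
-/

noncomputable section

open Set Filter

theorem lamF_self (f : ℝ → ℝ) (u : ℝ) : lamF f u u = 0 := by
  simp [lamF]

theorem lamF_comm (f : ℝ → ℝ) (u v : ℝ) : lamF f u v = lamF f v u := by
  rw [lamF, lamF, ← neg_sub (f u), ← neg_sub u, neg_div_neg_eq]

theorem lamF_comp_neg (f : ℝ → ℝ) (u v : ℝ) :
    lamF (fun w => f (-w)) (-u) (-v) = -lamF f u v := by
  simp only [lamF, neg_neg]
  rw [show -v - -u = -(v - u) by ring, div_neg]

theorem StrictConvexOn.lamF_strictMonoOn {f : ℝ → ℝ} (hf : StrictConvexOn ℝ univ f) (c : ℝ) :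
    StrictMonoOn (fun u => lamF f u c) {c}ᶜ := fun u hu v hv huv => by
  simp only [lamF_comm f _ c]
  exact hf.secant_strict_mono trivial trivial trivial hu hv huv

theorem nonneg_of_deriv_pos_of_eq_zero {g g' : ℝ → ℝ} {a b : ℝ}
    (hg : ∀ t ∈ Icc a b, HasDerivWithinAt g (g' t) (Icc a b) t) (ha : 0 ≤ g a)
    (hg' : ∀ t ∈ Icc a b, g t = 0 → 0 < g' t) : ∀ t ∈ Icc a b, 0 ≤ g t :=
  image_le_of_deriv_right_lt_deriv_boundary' (f' := fun _ => 0) continuousOn_const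
    (fun _ _ => hasDerivWithinAt_const _ _ _) ha (fun t ht => (hg t ht).continuousWithinAt)
    (fun t ht => (hg t (Ico_subset_Icc_self ht)).mono_of_mem_nhdsWithin
      (Icc_mem_nhdsGE_of_mem ht))
    (fun t ht h => hg' t (Ico_subset_Icc_self ht) h.symm)

theorem pos_of_deriv_pos_of_eq_zero {g g' : ℝ → ℝ} {a b : ℝ}
    (hg : ∀ t ∈ Icc a b, HasDerivWithinAt g (g' t) (Icc a b) t) (ha : 0 ≤ g a)
    (hg' : ∀ t ∈ Icc a b, g t = 0 → 0 < g' t) : ∀ t ∈ Ioc a b, 0 < g t := by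
  intro t ht
  have hnonneg := nonneg_of_deriv_pos_of_eq_zero hg ha hg'
  have htab : t ∈ Icc a b := Ioc_subset_Icc_self ht
  refine (hnonneg t htab).lt_of_ne' fun h0 => ?_
  have hmin : IsLocalMinOn g (Icc a b) t :=
    IsMinOn.localize fun s hs => by simpa [h0] using hnonneg s hs
  -- `t` is a minimum on `[a, b]` and `a - t < 0` points into `[a, b]`, so `g' t ≤ 0`.
  have hleft : 0 ≤ (a - t) * g' t := by
    simpa using hmin.hasFDerivWithinAt_nonneg (hg t htab).hasFDerivWithinAt
      (sub_mem_posTangentConeAt_of_segment_subset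
        ((convex_Icc a b).segment_subset htab (left_mem_Icc.2 (ht.1.le.trans ht.2))))
  nlinarith [hg' t htab h0, ht.1]

theorem lt_critical_of_apply_eq {f : ℝ → ℝ} {θ B Bbar : ℝ} (hf : Continuous f)
    (hmono : StrictMono (deriv f)) (hθ : deriv f θ = 0) (hB : θ < B) (hBbar : Bbar ≤ θ)
    (hfB : f Bbar = f B) : Bbar < θ := by
  refine hBbar.lt_of_ne fun hθBbar => ?_
  have hinc : StrictMonoOn f (Ici θ) :=
    strictMonoOn_of_deriv_pos (convex_Ici θ) hf.continuousOn fun u hu => by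
      rw [interior_Ici] at hu
      exact hθ ▸ hmono hu
  exact (hinc self_mem_Ici hB.le hB).ne (hθBbar ▸ hfB)

namespace LeftShockSol

variable {f finv y : ℝ → ℝ} {T B Bbar R : ℝ}

theorem pos_of_mem (hB : 0 < deriv f B) (hR : 0 < R) {t : ℝ} (ht : t ∈ Icc (R / deriv f B) T) :
    0 < t :=
  (div_pos hR hB).trans_le ht.1

theorem le_mul_deriv (hmono : StrictMono (deriv f)) (hfinv : ∀ p, deriv f (finv p) = p)
    (hB : 0 < deriv f B) (hfB : f Bbar = f B) (hR : 0 < R)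
    (hy : LeftShockSol f finv T B Bbar R y) :
    ∀ t ∈ Icc (R / deriv f B) T, y t + R ≤ t * deriv f B := by
  have hbarrier := nonneg_of_deriv_pos_of_eq_zero (g := fun t => t * deriv f B - (y t + R))
    (fun t ht => ((hasDerivWithinAt_id t _).mul_const _).sub ((hy.2 t ht).add_const R))
    (by simp [hy.1, div_mul_cancel₀ R hB.ne'])
    (fun t ht h0 => by
      have hslope : (y t + R) / t = deriv f B := by
        rw [div_eq_iff (pos_of_mem hB hR ht).ne']
        linarith
      have hfinvB : finv (deriv f B) = B := hmono.injective (hfinv _)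
      simpa [hslope, hfinvB, lamF, hfB] using hB)
  exact fun t ht => sub_nonneg.1 (hbarrier t ht)

/-- On the line `z = t·f'(B̄)` the speed is the junk value `λ(B̄, B̄) = 0 > f'(B̄)`, which makes
that line a strict barrier. -/
theorem mul_deriv_lt (hmono : StrictMono (deriv f)) (hfinv : ∀ p, deriv f (finv p) = p)
    (hB : 0 < deriv f B) (hBbar : deriv f Bbar < 0) (hR : 0 < R)
    (hy : LeftShockSol f finv T B Bbar R y) :
    ∀ t ∈ Icc (R / deriv f B) T, t * deriv f Bbar < y t + R := by
  have ht₀ : 0 < R / deriv f B := div_pos hR hB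
  have hstart : 0 < y (R / deriv f B) + R - R / deriv f B * deriv f Bbar := by
    rw [hy.1]
    nlinarith
  have hbarrier := pos_of_deriv_pos_of_eq_zero (g := fun t => y t + R - t * deriv f Bbar)
    (fun t ht => ((hy.2 t ht).add_const R).sub ((hasDerivWithinAt_id t _).mul_const _))
    hstart.le
    (fun t ht h0 => by
      have hslope : (y t + R) / t = deriv f Bbar := by
        rw [div_eq_iff (pos_of_mem hB hR ht).ne']
        linarith
      have hfinvBbar : finv (deriv f Bbar) = Bbar := hmono.injective (hfinv _)
      simpa [hslope, hfinvBbar, lamF_self] using hBbar)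
  intro t ht
  rcases ht.1.eq_or_lt with rfl | hlt
  · exact sub_pos.1 hstart
  · exact sub_pos.1 (hbarrier t ⟨hlt, ht.2⟩)

theorem finv_slope_mem (hmono : StrictMono (deriv f)) (hfinv : ∀ p, deriv f (finv p) = p)
    (hB : 0 < deriv f B) (hBbar : deriv f Bbar < 0) (hfB : f Bbar = f B) (hR : 0 < R)
    (hy : LeftShockSol f finv T B Bbar R y) {t : ℝ} (ht : t ∈ Icc (R / deriv f B) T) :
    finv ((y t + R) / t) ∈ Ioc Bbar B := by
  have htpos := pos_of_mem hB hR ht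
  constructor
  · refine hmono.lt_iff_lt.1 ?_
    rw [hfinv, lt_div_iff₀ htpos]
    linarith [hy.mul_deriv_lt hmono hfinv hB hBbar hR t ht]
  · refine hmono.le_iff_le.1 ?_
    rw [hfinv, div_le_iff₀ htpos]
    linarith [hy.le_mul_deriv hmono hfinv hB hfB hR t ht]

theorem antitoneOn (hconv : StrictConvexOn ℝ univ f) (hmono : StrictMono (deriv f))
    (hfinv : ∀ p, deriv f (finv p) = p) (hB : 0 < deriv f B) (hBbar : deriv f Bbar < 0)
    (hfB : f Bbar = f B) (hR : 0 < R) (hy : LeftShockSol f finv T B Bbar R y) :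
    AntitoneOn y (Icc (R / deriv f B) T) := by
  refine antitoneOn_of_hasDerivWithinAt_nonpos (convex_Icc _ _)
    (fun t ht => (hy.2 t ht).continuousWithinAt)
    (fun t ht => (hy.2 t (interior_subset ht)).mono interior_subset) fun t ht => ?_
  obtain ⟨hBbar_lt_u, hu_le_B⟩ := hy.finv_slope_mem hmono hfinv hB hBbar hfB hR (interior_subset ht)
  calc lamF f (finv ((y t + R) / t)) Bbar ≤ lamF f B Bbar :=
        (hconv.lamF_strictMonoOn Bbar).monotoneOn hBbar_lt_u.ne'
          (hBbar_lt_u.trans_le hu_le_B).ne' hu_le_B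
    _ = 0 := by simp [lamF, hfB]

theorem terminal_lt {y₁ y₂ : ℝ → ℝ} {θ R₁ R₂ : ℝ} (hf : Continuous f)
    (hmono : StrictMono (deriv f)) (hfinv : ∀ p, deriv f (finv p) = p) (hθ : deriv f θ = 0)
    (hB : θ < B) (hBbar : Bbar ≤ θ) (hfB : f Bbar = f B) (hR₁ : 0 < R₁) (hR : R₁ < R₂)
    (hR₂ : R₂ < T * deriv f B) (hy₁ : LeftShockSol f finv T B Bbar R₁ y₁)
    (hy₂ : LeftShockSol f finv T B Bbar R₂ y₂) : y₁ T < y₂ T := by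
  have hconv := hmono.strictConvexOn_univ_of_deriv hf
  have hfB' : 0 < deriv f B := hθ ▸ hmono hB
  have hfBbar : deriv f Bbar < 0 := hθ ▸ hmono (lt_critical_of_apply_eq hf hmono hθ hB hBbar hfB)
  have ht₁₂ : R₁ / deriv f B < R₂ / deriv f B := div_lt_div_of_pos_right hR hfB'
  have ht₂T : R₂ / deriv f B < T := (div_lt_iff₀ hfB').2 hR₂
  have hsub : Icc (R₂ / deriv f B) T ⊆ Icc (R₁ / deriv f B) T := Icc_subset_Icc_left ht₁₂.le
  have hstart : y₁ (R₂ / deriv f B) ≤ 0 := hy₁.1 ▸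
    hy₁.antitoneOn hconv hmono hfinv hfB' hfBbar hfB hR₁ ⟨le_rfl, (ht₁₂.trans ht₂T).le⟩
      ⟨ht₁₂.le, ht₂T.le⟩ ht₁₂.le
  have hgap := pos_of_deriv_pos_of_eq_zero (g := fun t => y₂ t - y₁ t)
    (fun t ht => (hy₂.2 t ht).sub ((hy₁.2 t (hsub ht)).mono hsub)) (by simpa [hy₂.1] using hstart)
    (fun t ht h0 => by
      have hslope : (y₁ t + R₁) / t < (y₂ t + R₂) / t :=
        (div_lt_div_iff_of_pos_right (pos_of_mem hfB' (hR₁.trans hR) ht)).2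
          (by linarith [sub_eq_zero.1 h0])
      have hu : finv ((y₁ t + R₁) / t) < finv ((y₂ t + R₂) / t) :=
        hmono.lt_iff_lt.1 (by rwa [hfinv, hfinv])
      have hBbar_lt := (hy₁.finv_slope_mem hmono hfinv hfB' hfBbar hfB hR₁ (hsub ht)).1
      exact sub_pos.2 <| hconv.lamF_strictMonoOn Bbar hBbar_lt.ne' (hBbar_lt.trans hu).ne' hu)
  exact sub_pos.1 (hgap T ⟨ht₂T, le_rfl⟩)

end LeftShockSol

namespace RightShockSol

variable {f finv x : ℝ → ℝ} {T A Abar L : ℝ}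

theorem neg_leftShockSol (hx : RightShockSol f finv T A Abar L x) :
    LeftShockSol (fun u => f (-u)) (fun p => -finv (-p)) T (-A) (-Abar) (-L) (fun t => -x t) := by
  have hstart : -L / deriv (fun u => f (-u)) (-A) = L / deriv f A := by
    rw [deriv_comp_neg, neg_neg, neg_div_neg_eq]
  refine ⟨by simp [hstart, hx.1], fun t ht => ?_⟩
  rw [hstart] at ht ⊢
  refine (hx.2 t ht).neg.congr_deriv ?_
  rw [← lamF_comp_neg, show (-x t + -L) / t = -((x t + L) / t) by ring]
  simp only [neg_neg]

theorem terminal_lt {x₁ x₂ : ℝ → ℝ} {θ L₁ L₂ : ℝ} (hf : Continuous f)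
    (hmono : StrictMono (deriv f)) (hfinv : ∀ p, deriv f (finv p) = p) (hθ : deriv f θ = 0)
    (hA : A < θ) (hAbar : θ ≤ Abar) (hfA : f Abar = f A) (hL₁ : T * deriv f A < L₁)
    (hL : L₁ < L₂) (hL₂ : L₂ < 0) (hx₁ : RightShockSol f finv T A Abar L₁ x₁)
    (hx₂ : RightShockSol f finv T A Abar L₂ x₂) : x₁ T < x₂ T := by
  have hmono_neg : StrictMono (deriv fun u => f (-u)) := fun u v huv => by
    simpa only [deriv_comp_neg, neg_lt_neg_iff] using hmono (neg_lt_neg huv)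
  have hterminal := hx₂.neg_leftShockSol.terminal_lt (hf.comp' continuous_neg) hmono_neg
    (fun p => by simp [deriv_comp_neg, hfinv]) (θ := -θ) (by simp [deriv_comp_neg, hθ])
    (neg_lt_neg hA) (neg_le_neg hAbar) (by simpa using hfA) (neg_pos.2 hL₂) (neg_lt_neg hL)
    (by simpa [deriv_comp_neg] using hL₁) hx₁.neg_leftShockSol
  exact neg_lt_neg_iff.1 hterminal

end RightShockSol

theorem backward_shock_terminal_strict_mono_general
    (f : ℝ → ℝ) (a : ℝ) (ha : 0 < a) (hf : ContDiff ℝ 2 f)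
    (hf2 : ∀ u : ℝ, a ≤ deriv (deriv f) u)
    (θ : ℝ) (hθ : deriv f θ = 0)
    (finv : ℝ → ℝ)
    (hfinv2 : ∀ p : ℝ, deriv f (finv p) = p)
    (T : ℝ) :
    (∀ B Bbar : ℝ, θ < B → Bbar ≤ θ → f Bbar = f B →
      ∀ R₁ R₂ : ℝ, R₁ ∈ Ioo (0:ℝ) (T * deriv f B) → R₂ ∈ Ioo (0:ℝ) (T * deriv f B) →
        R₁ < R₂ →
        ∀ y₁ y₂ : ℝ → ℝ, LeftShockSol f finv T B Bbar R₁ y₁ →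
          LeftShockSol f finv T B Bbar R₂ y₂ → y₁ T < y₂ T) ∧
    (∀ A Abar : ℝ, A < θ → θ ≤ Abar → f Abar = f A →
      ∀ L₁ L₂ : ℝ, L₁ ∈ Ioo (T * deriv f A) (0:ℝ) → L₂ ∈ Ioo (T * deriv f A) (0:ℝ) →
        L₁ < L₂ →
        ∀ x₁ x₂ : ℝ → ℝ, RightShockSol f finv T A Abar L₁ x₁ →
          RightShockSol f finv T A Abar L₂ x₂ → x₁ T < x₂ T) := by
  have hcont : Continuous f := hf.continuous
  have hmono : StrictMono (deriv f) := strictMono_of_deriv_pos fun u => ha.trans_le (hf2 u)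
  exact ⟨fun B Bbar hB hBbar hfB R₁ R₂ hR₁ hR₂ hR y₁ y₂ hy₁ hy₂ =>
      hy₁.terminal_lt hcont hmono hfinv2 hθ hB hBbar hfB hR₁.1 hR hR₂.2 hy₂,
    fun A Abar hA hAbar hfA L₁ L₂ hL₁ hL₂ hL x₁ x₂ hx₁ hx₂ =>
      hx₁.terminal_lt hcont hmono hfinv2 hθ hA hAbar hfA hL₁.1 hL hL₂.2 hx₂⟩

/-- **Lemma 3.1**: strict monotonicity of the terminal values of the backward shocks
with respect to the data `R` (resp. `L`). -/
theorem backward_shock_terminal_strict_mono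
    (f : ℝ → ℝ) (a : ℝ) (ha : 0 < a) (hf : ContDiff ℝ 2 f)
    (hf2 : ∀ u : ℝ, a ≤ deriv (deriv f) u)
    (θ : ℝ) (hθ : deriv f θ = 0)
    (finv : ℝ → ℝ) (hfinv1 : ∀ u : ℝ, finv (deriv f u) = u)
    (hfinv2 : ∀ p : ℝ, deriv f (finv p) = p)
    (T : ℝ) (hT : 0 < T) :
    (∀ B Bbar : ℝ, θ < B → Bbar ≤ θ → f Bbar = f B →
      ∀ R₁ R₂ : ℝ, R₁ ∈ Ioo (0:ℝ) (T * deriv f B) → R₂ ∈ Ioo (0:ℝ) (T * deriv f B) →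
        R₁ < R₂ →
        ∀ y₁ y₂ : ℝ → ℝ, LeftShockSol f finv T B Bbar R₁ y₁ →
          LeftShockSol f finv T B Bbar R₂ y₂ → y₁ T < y₂ T) ∧
    (∀ A Abar : ℝ, A < θ → θ ≤ Abar → f Abar = f A →
      ∀ L₁ L₂ : ℝ, L₁ ∈ Ioo (T * deriv f A) (0:ℝ) → L₂ ∈ Ioo (T * deriv f A) (0:ℝ) →
        L₁ < L₂ →
        ∀ x₁ x₂ : ℝ → ℝ, RightShockSol f finv T A Abar L₁ x₁ →
          RightShockSol f finv T A Abar L₂ x₂ → x₁ T < x₂ T) :=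
  backward_shock_terminal_strict_mono_general f a ha hf hf2 θ hθ finv hfinv2 T
end
end

section
/- Strict monotonicity of the auxiliary function Υ (Step 3 in the proof of Lemma 3.1): Let f, θ, T be as in the context, let B > θ, and fix c ∈ (T·f'(B̄), 0). Define g(x) := (f')⁻¹((c+x)/T) and Υ(x) := B̄·c + B·x − T·(g(x)·f'(g(x)) − f(g(x))) − T·f(B) for x ∈ (0, T·f'(B)). Then Υ is differentiable with Υ'(x) = B − g(x) > 0 for every x ∈ (0, T·f'(B)); in particular Υ is strictly increasing on (0, T·f'(B)) and has at most one zero in this interval. -/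
noncomputable section

open Set Filter

/-- The auxiliary function `Υ` from Step 3 of the proof of Lemma 3.1. -/
def Upsilon (f finv : ℝ → ℝ) (T B Bbar c : ℝ) (x : ℝ) : ℝ :=
  Bbar * c + B * x -
    T * (finv ((c + x) / T) * deriv f (finv ((c + x) / T)) - f (finv ((c + x) / T))) -
    T * f B

/-!
Since `f'(g(x)) = (c + x) / T`, we have `Υ(x) = B̄ c + B x - T f*((c + x) / T) - T f(B)`, where
`f*(p) = p (f')⁻¹(p) - f((f')⁻¹(p))` is the Legendre transform of `f`, whose derivative is `(f')⁻¹`.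
Hence `Υ'(x) = B - g(x)`, and this is positive because `(c + x) / T < f'(B)` and `f'` is increasing.
-/

open Function

def legendre (f finv : ℝ → ℝ) (p : ℝ) : ℝ := finv p * p - f (finv p)

theorem hasDerivAt_legendre {f finv : ℝ → ℝ} {p d : ℝ} (hfinv : HasDerivAt finv d p)
    (hf : HasDerivAt f p (finv p)) : HasDerivAt (legendre f finv) (finv p) p :=
  ((hfinv.mul (hasDerivAt_id' p)).sub (hf.comp p hfinv)).congr_deriv (by ring)

section InverseDerivative

variable {f finv : ℝ → ℝ} (hpos : ∀ u, 0 < deriv (deriv f) u)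
  (hr : RightInverse finv (deriv f))
include hpos hr

theorem continuous_of_rightInverse_deriv : Continuous finv :=
  ((strictMono_of_deriv_pos hpos).orderIsoOfRightInverse _ finv hr).symm.continuous

theorem lt_iff_of_rightInverse_deriv (p u : ℝ) : finv p < u ↔ p < deriv f u := by
  rw [← (strictMono_of_deriv_pos hpos).lt_iff_lt, hr p]

theorem hasDerivAt_of_rightInverse_deriv (p : ℝ) :
    HasDerivAt finv (deriv (deriv f) (finv p))⁻¹ p :=
  HasDerivAt.of_local_left_inverse (continuous_of_rightInverse_deriv hpos hr).continuousAt
    (differentiableAt_of_deriv_ne_zero (hpos _).ne').hasDerivAt (hpos _).ne'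
    (Filter.Eventually.of_forall hr)

end InverseDerivative

theorem upsilon_eq_legendre {f finv : ℝ → ℝ} (hr : RightInverse finv (deriv f))
    (T B Bbar c x : ℝ) :
    Upsilon f finv T B Bbar c x =
      Bbar * c + B * x - T * legendre f finv ((c + x) / T) - T * f B := by
  rw [Upsilon, legendre, hr]

theorem hasDerivAt_upsilon {f finv : ℝ → ℝ} (hf : Differentiable ℝ f)
    (hpos : ∀ u, 0 < deriv (deriv f) u) (hr : RightInverse finv (deriv f))
    {T : ℝ} (hT : T ≠ 0) (B Bbar c x : ℝ) :
    HasDerivAt (Upsilon f finv T B Bbar c) (B - finv ((c + x) / T)) x := by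
  have hp : HasDerivAt (fun x => (c + x) / T) (1 / T) x := by
    simpa using ((hasDerivAt_id x).const_add c).div_const T
  have hf' : HasDerivAt f ((c + x) / T) (finv ((c + x) / T)) :=
    (hf _).hasDerivAt.congr_deriv (hr _)
  have hlegendre :=
    (hasDerivAt_legendre (hasDerivAt_of_rightInverse_deriv hpos hr _) hf').comp x hp
  rw [funext (upsilon_eq_legendre hr T B Bbar c)]
  exact ((((hasDerivAt_id' x).const_mul B).const_add (Bbar * c)).sub
    (hlegendre.const_mul T) |>.sub_const (T * f B)).congr_deriv (by field_simp)

theorem upsilon_strict_mono_general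
    (f : ℝ → ℝ) (a : ℝ) (ha : 0 < a) (hf : ContDiff ℝ 2 f)
    (hf2 : ∀ u : ℝ, a ≤ deriv (deriv f) u)
    (finv : ℝ → ℝ)
    (hfinv2 : ∀ p : ℝ, deriv f (finv p) = p)
    (T : ℝ) (hT : 0 < T)
    (B Bbar : ℝ)
    (c : ℝ) (hc : c ∈ Ioo (T * deriv f Bbar) (0:ℝ)) :
    (∀ x ∈ Ioo (0:ℝ) (T * deriv f B),
        HasDerivAt (Upsilon f finv T B Bbar c) (B - finv ((c + x) / T)) x ∧
        0 < B - finv ((c + x) / T)) ∧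
    StrictMonoOn (Upsilon f finv T B Bbar c) (Ioo (0:ℝ) (T * deriv f B)) ∧
    (∀ x₁ ∈ Ioo (0:ℝ) (T * deriv f B), ∀ x₂ ∈ Ioo (0:ℝ) (T * deriv f B),
        Upsilon f finv T B Bbar c x₁ = 0 → Upsilon f finv T B Bbar c x₂ = 0 →
          x₁ = x₂) := by
  have hpos u : 0 < deriv (deriv f) u := ha.trans_le (hf2 u)
  have hderiv := hasDerivAt_upsilon (hf.differentiable two_ne_zero) hpos hfinv2 hT.ne' B Bbar c
  have hlt : ∀ x ∈ Ioo (0:ℝ) (T * deriv f B), finv ((c + x) / T) < B := fun x hx => by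
    rw [lt_iff_of_rightInverse_deriv hpos hfinv2, div_lt_iff₀ hT]
    linarith [hc.2, hx.2]
  have hmono : StrictMonoOn (Upsilon f finv T B Bbar c) (Ioo (0:ℝ) (T * deriv f B)) := by
    refine strictMonoOn_of_deriv_pos (convex_Ioo _ _)
      (fun x _ => (hderiv x).continuousAt.continuousWithinAt) fun x hx => ?_
    rw [interior_Ioo] at hx
    rw [(hderiv x).deriv, sub_pos]
    exact hlt x hx
  exact ⟨fun x hx => ⟨hderiv x, sub_pos.2 (hlt x hx)⟩, hmono,
    fun x₁ hx₁ x₂ hx₂ h₁ h₂ => hmono.injOn hx₁ hx₂ (h₁.trans h₂.symm)⟩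

/-- **Step 3 of the proof of Lemma 3.1**: strict monotonicity of the auxiliary
function `Υ`. -/
theorem upsilon_strict_mono
    (f : ℝ → ℝ) (a : ℝ) (ha : 0 < a) (hf : ContDiff ℝ 2 f)
    (hf2 : ∀ u : ℝ, a ≤ deriv (deriv f) u)
    (θ : ℝ) (hθ : deriv f θ = 0)
    (finv : ℝ → ℝ) (hfinv1 : ∀ u : ℝ, finv (deriv f u) = u)
    (hfinv2 : ∀ p : ℝ, deriv f (finv p) = p)
    (T : ℝ) (hT : 0 < T)
    (B Bbar : ℝ) (hB : θ < B) (hBbar1 : Bbar ≤ θ) (hBbar2 : f Bbar = f B)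
    (c : ℝ) (hc : c ∈ Ioo (T * deriv f Bbar) (0:ℝ)) :
    (∀ x ∈ Ioo (0:ℝ) (T * deriv f B),
        HasDerivAt (Upsilon f finv T B Bbar c) (B - finv ((c + x) / T)) x ∧
        0 < B - finv ((c + x) / T)) ∧
    StrictMonoOn (Upsilon f finv T B Bbar c) (Ioo (0:ℝ) (T * deriv f B)) ∧
    (∀ x₁ ∈ Ioo (0:ℝ) (T * deriv f B), ∀ x₂ ∈ Ioo (0:ℝ) (T * deriv f B),
        Upsilon f finv T B Bbar c x₁ = 0 → Upsilon f finv T B Bbar c x₂ = 0 →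
          x₁ = x₂) :=
  upsilon_strict_mono_general f a ha hf hf2 finv hfinv2 T hT B Bbar c hc
end
end
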